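/- Let N be a tree-child time consistent hybridization network with more than two leaves. Then at least one of the following reductions can be applied to N: (U) there is a tree leaf whose parent has only that child; (T) there are two sibling tree leaves; or (H) there is a hybrid leaf each of whose parents has a tree leaf child. -/

import Mathlib

open Classical

/-- A walk (path) in a digraph: a nonempty list of vertices with consecutive arcs. -/
def IsWalk {V : Type} (E : V → V → Prop) (p : List V) : Prop := p ≠ [] ∧ p.Chain' E

/-- A path with origin `u` and end `v`. -/
def WalkFromTo {V : Type} (E : V → V → Prop) (u v : V) (p : List V) : Prop :=
  IsWalk E p ∧ p.head? = some u ∧ p.getLast? = some v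

/-- `v` is a descendant of `u` (possibly trivial path from `u` to `v`). -/
def Desc {V : Type} (E : V → V → Prop) (u v : V) : Prop := Relation.ReflTransGen E u v

/-- A root: a node with no incoming arcs. -/
def IsRootNode {V : Type} (E : V → V → Prop) (r : V) : Prop := ∀ u, ¬ E u r

/-- `u` is a strict ancestor of `v`: `v` is a descendant of `u` and every path
from a root to `v` contains `u`. -/
def StrictAnc {V : Type} (E : V → V → Prop) (u v : V) : Prop :=
  Desc E u v ∧ ∀ (r : V) (p : List V), IsRootNode E r → WalkFromTo E r v p → u ∈ p

/-- In-degree. -/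
noncomputable def indeg {V : Type} (E : V → V → Prop) (v : V) : ℕ := {u | E u v}.ncard
/-- Out-degree. -/
noncomputable def outdeg {V : Type} (E : V → V → Prop) (v : V) : ℕ := {w | E v w}.ncard

/-- Tree node: in-degree at most 1. -/
def IsTreeNode {V : Type} (E : V → V → Prop) (v : V) : Prop := indeg E v ≤ 1
/-- Hybrid node: in-degree at least 2. -/
def IsHybrid {V : Type} (E : V → V → Prop) (v : V) : Prop := 2 ≤ indeg E v
/-- Leaf: no outgoing arcs. -/
def IsLeaf {V : Type} (E : V → V → Prop) (v : V) : Prop := ∀ w, ¬ E v w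

/-- Acyclicity: no non-trivial path from a node to itself. -/
def Acyclic {V : Type} (E : V → V → Prop) : Prop := ∀ v, ¬ Relation.TransGen E v v

/-- A hybridization network: a rooted DAG whose single root has out-degree > 1. -/
structure IsHybNet {V : Type} (E : V → V → Prop) (r : V) : Prop where
  acyclic : Acyclic E
  isRoot : IsRootNode E r
  uniqueRoot : ∀ x, IsRootNode E x → x = r
  rootOut : 2 ≤ outdeg E r

/-- Tree-child condition: every internal node has a tree-node child. -/
def TreeChild {V : Type} (E : V → V → Prop) : Prop :=
  ∀ v, ¬ IsLeaf E v → ∃ w, E v w ∧ IsTreeNode E w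

/-- Time consistency: a temporal representation exists. -/
def TimeConsistent {V : Type} (E : V → V → Prop) : Prop :=
  ∃ τ : V → ℕ, ∀ u v, E u v → (IsTreeNode E v → τ u < τ v) ∧ (IsHybrid E v → τ u = τ v)

/-- The leaves are bijectively labeled by `S` via `leaf`. -/
def LabelsLeaves {V S : Type} (E : V → V → Prop) (leaf : S → V) : Prop :=
  Function.Injective leaf ∧ (∀ s, IsLeaf E (leaf s)) ∧ ∀ v, IsLeaf E v → ∃ s, leaf s = v

/-- Distance: length of a shortest path from `u` to `v`. -/
noncomputable def dist {V : Type} (E : V → V → Prop) (u v : V) : ℕ :=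
  sInf {n | ∃ p, WalkFromTo E u v p ∧ p.length = n + 1}

/-- Height: largest length of a path from `v` to a leaf. -/
noncomputable def height {V : Type} (E : V → V → Prop) (v : V) : ℕ :=
  sSup {n | ∃ p w, WalkFromTo E v w p ∧ IsLeaf E w ∧ p.length = n + 1}

/-- Common ancestors of `u` and `v` that are strict ancestors of at least one of them. -/
def CSASet {V : Type} (E : V → V → Prop) (u v : V) : Set V :=
  {x | Desc E x u ∧ Desc E x v ∧ (StrictAnc E x u ∨ StrictAnc E x v)}

/-- `x` is a least common semi-strict ancestor of `u` and `v`. -/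
def IsLCSA {V : Type} (E : V → V → Prop) (u v x : V) : Prop :=
  x ∈ CSASet E u v ∧ ∀ y ∈ CSASet E u v, height E x ≤ height E y

/-- The least common semi-strict ancestor `[u,v]` (the root `r` witnesses nonemptiness). -/
noncomputable def lcsa {V : Type} (E : V → V → Prop) (r u v : V) : V :=
  @Classical.epsilon V ⟨r⟩ (IsLCSA E u v)

/-- `ℓ_N(u,v)`: the distance from `[u,v]` to `u`. -/
noncomputable def ell {V : Type} (E : V → V → Prop) (r u v : V) : ℕ :=
  dist E (lcsa E r u v) u

/-- `L_N(u,v) = ℓ_N(u,v) + ℓ_N(v,u)`: the LCSA-path length between `u` and `v`. -/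
noncomputable def pathLen {V : Type} (E : V → V → Prop) (r u v : V) : ℕ :=
  ell E r u v + ell E r v u

/-- `h_N(u,v)`: −1 if `[u,v]` is a strict ancestor of `u` only, 1 if of `v` only, 0 if of both. -/
noncomputable def hval {V : Type} (E : V → V → Prop) (r u v : V) : ℤ :=
  if StrictAnc E (lcsa E r u v) u then
    (if StrictAnc E (lcsa E r u v) v then 0 else -1)
  else 1

/-- Siblings: distinct nodes sharing a parent. -/
def Sibling {V : Type} (E : V → V → Prop) (u v : V) : Prop :=
  u ≠ v ∧ ∃ p, E p u ∧ E p v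

/-- A tree path: a non-trivial path whose end and intermediate nodes are tree nodes. -/
def TreePath {V : Type} (E : V → V → Prop) (p : List V) (u v : V) : Prop :=
  WalkFromTo E u v p ∧ 2 ≤ p.length ∧ ∀ w ∈ p.tail, IsTreeNode E w

/-- `v` is a tree descendant of `u`. -/
def TreeDesc {V : Type} (E : V → V → Prop) (u v : V) : Prop := ∃ p, TreePath E p u v

/-- Quasi-binary hybridization network. -/
def QuasiBinary {V : Type} (E : V → V → Prop) : Prop :=
  ∀ v : V, (indeg E v, outdeg E v) ∈ ({(0,2),(1,0),(1,2),(2,0),(2,1),(2,2)} : Set (ℕ × ℕ))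

/-- Fully resolved hybridization network node types. -/
def FullyResolvedHyb {V : Type} (E : V → V → Prop) : Prop :=
  ∀ v : V, (indeg E v, outdeg E v) ∈ ({(0,2),(1,0),(1,2),(2,0),(2,2)} : Set (ℕ × ℕ))

/-- Fully resolved phylogenetic network node types. -/
def FullyResolvedPhylo {V : Type} (E : V → V → Prop) : Prop :=
  ∀ v : V, (indeg E v, outdeg E v) ∈ ({(0,2),(1,0),(1,2),(2,1)} : Set (ℕ × ℕ))

/-- Phylogenetic network condition: every hybrid node has exactly one child, a tree node. -/
def PhyloNet {V : Type} (E : V → V → Prop) : Prop :=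
  ∀ v, IsHybrid E v → ∃ w, E v w ∧ IsTreeNode E w ∧ ∀ x, E v x → x = w

/-!
Let `M` be the largest time stamp of an internal node. A tree child of an internal node at
time `M` lives strictly later, so it is a leaf; by tree-childness every internal node at time `M`
therefore has a tree leaf child. A hybrid child shares the time of its parents, so choose an
internal node `u` at time `M` none of whose children is internal at time `M` (possible by
acyclicity). Either `u` has a single child, a tree leaf (U), or it has a second child: a tree
child is a leaf (T), and a hybrid child is a leaf at time `M` all of whose parents are internal
nodes at time `M`, hence have tree leaf children (H).
-/

def IsTemporalMap {V : Type} (E : V → V → Prop) (τ : V → ℕ) : Prop :=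
  ∀ u v, E u v → (IsTreeNode E v → τ u < τ v) ∧ (IsHybrid E v → τ u = τ v)

section Digraph

variable {V : Type} {E : V → V → Prop}

lemma isTreeNode_or_isHybrid (v : V) : IsTreeNode E v ∨ IsHybrid E v := by
  unfold IsTreeNode IsHybrid; omega

lemma IsHybrid.not_isTreeNode {v : V} (hv : IsHybrid E v) : ¬ IsTreeNode E v := by
  unfold IsTreeNode; unfold IsHybrid at hv; omega

lemma IsHybNet.not_isLeaf_root {r : V} (hnet : IsHybNet E r) : ¬ IsLeaf E r := by
  intro hr
  have hnone : {w | E r w} = ∅ := Set.eq_empty_iff_forall_notMem.mpr hr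
  have h := hnet.rootOut
  rw [outdeg, hnone, Set.ncard_empty] at h
  omega

lemma Acyclic.exists_mem_forall_not_mem [Finite V] (h : Acyclic E) {S : Set V}
    (hS : S.Nonempty) : ∃ u ∈ S, ∀ w, E u w → w ∉ S := by
  have : IsTrans V (fun a b => Relation.TransGen E b a) := ⟨fun _ _ _ h₁ h₂ => h₂.trans h₁⟩
  have : Std.Irrefl (fun a b => Relation.TransGen E b a) := ⟨h⟩
  obtain ⟨u, hu, hmin⟩ :=
    (Finite.wellFounded_of_trans_of_irrefl (fun a b => Relation.TransGen E b a)).has_min S hS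
  exact ⟨u, hu, fun w huw hw => hmin w hw (.single huw)⟩

end Digraph

namespace IsTemporalMap

variable {V : Type} {E : V → V → Prop} {τ : V → ℕ} {M : ℕ}
  (hτ : IsTemporalMap E τ) (hM : ∀ v, ¬ IsLeaf E v → τ v ≤ M)
include hτ hM

lemma isLeaf_of_isTreeNode {u v : V} (huv : E u v) (hv : IsTreeNode E v) (hu : M ≤ τ u) :
    IsLeaf E v := by
  by_contra hleaf
  have := (hτ u v huv).1 hv
  have := hM v hleaf
  omega

lemma exists_tree_leaf_child (htc : TreeChild E) {u : V} (hu : ¬ IsLeaf E u) (huM : M ≤ τ u) :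
    ∃ j, E u j ∧ IsLeaf E j ∧ IsTreeNode E j := by
  obtain ⟨j, huj, hj⟩ := htc u hu
  exact ⟨j, huj, hτ.isLeaf_of_isTreeNode hM huj hj huM, hj⟩

lemma forall_parent_exists_tree_leaf_child (htc : TreeChild E) {w : V} (hw : IsHybrid E w)
    (hwM : M ≤ τ w) : ∀ v, E v w → ∃ j, E v j ∧ IsLeaf E j ∧ IsTreeNode E j ∧ j ≠ w := by
  intro v hvw
  have hvτ : τ v = τ w := (hτ v w hvw).2 hw
  obtain ⟨j, hvj, hj, hjt⟩ :=
    hτ.exists_tree_leaf_child hM htc (fun hv => hv w hvw) (hvτ ▸ hwM)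
  exact ⟨j, hvj, hj, hjt, fun hjw => hw.not_isTreeNode (hjw ▸ hjt)⟩

end IsTemporalMap

theorem stmt6_general {V : Type} [Fintype V] (E : V → V → Prop) (r : V)
    (hnet : IsHybNet E r) (htc : TreeChild E) (hti : TimeConsistent E) :
    (∃ i u, IsLeaf E i ∧ IsTreeNode E i ∧ E u i ∧ ∀ w, E u w → w = i) ∨
    (∃ i j, IsLeaf E i ∧ IsTreeNode E i ∧ IsLeaf E j ∧ IsTreeNode E j ∧ Sibling E i j) ∨
    (∃ i, IsLeaf E i ∧ IsHybrid E i ∧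
      ∀ v, E v i → ∃ j, E v j ∧ IsLeaf E j ∧ IsTreeNode E j ∧ j ≠ i) := by
  obtain ⟨τ, hτ⟩ : ∃ τ, IsTemporalMap E τ := hti
  obtain ⟨u₀, hu₀, hM⟩ := Set.exists_max_image {v | ¬ IsLeaf E v} τ (Set.toFinite _)
    ⟨r, hnet.not_isLeaf_root⟩
  obtain ⟨u, ⟨hu, huM⟩, hsink⟩ :=
    hnet.acyclic.exists_mem_forall_not_mem (S := {v | ¬ IsLeaf E v ∧ τ v = τ u₀}) ⟨u₀, hu₀, rfl⟩
  obtain ⟨i, hui, hi, hit⟩ := hτ.exists_tree_leaf_child hM htc hu huM.ge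
  by_cases hsecond : ∃ w, E u w ∧ w ≠ i
  · obtain ⟨w, huw, hwi⟩ := hsecond
    rcases isTreeNode_or_isHybrid w with hwt | hwh
    · have hw := hτ.isLeaf_of_isTreeNode hM huw hwt huM.ge
      exact .inr (.inl ⟨i, w, hi, hit, hw, hwt, hwi.symm, u, hui, huw⟩)
    · have hwτ : τ w = τ u₀ := ((hτ u w huw).2 hwh).symm.trans huM
      have hw : IsLeaf E w := by_contra fun hw => hsink w huw ⟨hw, hwτ⟩
      exact .inr (.inr ⟨w, hw, hwh, hτ.forall_parent_exists_tree_leaf_child hM htc hwh hwτ.ge⟩)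
  · exact .inl ⟨i, u, hi, hit, hui, fun w huw => by_contra fun hwi => hsecond ⟨w, huw, hwi⟩⟩

/-- In a TCTC hybridization network with more than two leaves, at least one
of the U, T, H reductions can be applied. -/
theorem stmt6 {V : Type} [Fintype V] (E : V → V → Prop) (r : V)
    (hnet : IsHybNet E r) (htc : TreeChild E) (hti : TimeConsistent E)
    (hleaves : 2 < {v | IsLeaf E v}.ncard) :
    (∃ i u, IsLeaf E i ∧ IsTreeNode E i ∧ E u i ∧ ∀ w, E u w → w = i) ∨
    (∃ i j, IsLeaf E i ∧ IsTreeNode E i ∧ IsLeaf E j ∧ IsTreeNode E j ∧ Sibling E i j) ∨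
    (∃ i, IsLeaf E i ∧ IsHybrid E i ∧
      ∀ v, E v i → ∃ j, E v j ∧ IsLeaf E j ∧ IsTreeNode E j ∧ j ≠ i) :=
  stmt6_general E r hnet htc hti
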